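/- Fix a finite group L, an integer t ≥ 2 and θ ∈ Aut(L), and let ℓ, k ∈ L. Then C_ℓ = C_k if and only if k belongs to the twisted conjugacy class O^{L,θ}_ℓ; consequently C_ℓ = {(x_1, …, x_t) ∈ L^t : x_t·x_{t-1}·⋯·x_2·x_1 ∈ O^{L,θ}_ℓ}. -/
import Mathlib


/-- The automorphism `u` of `L^t`: `u(ℓ₁, …, ℓ_t) = (θ(ℓ_t), ℓ₁, …, ℓ_{t-1})`
(indices `0, …, t-1`, so coordinate `0` is `ℓ₁` and coordinate `t-1` is `ℓ_t`). -/
def thrU {L : Type*} [Group L] (θ : L ≃* L) (t : ℕ) (x : Fin t → L) : Fin t → L :=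
  fun i => if (i : ℕ) = 0 then θ (x ⟨t - 1, by have := i.2; omega⟩)
    else x ⟨(i : ℕ) - 1, by have := i.2; omega⟩

/-- The rack operation `y ▹ z = y · u(z · y⁻¹)` on `L^t`. -/
def thrOp {L : Type*} [Group L] (θ : L ≃* L) (t : ℕ) (y z : Fin t → L) : Fin t → L :=
  y * thrU θ t (z * y⁻¹)

/-- The element `(e, …, e, ℓ)` of `L^t`. -/
def thrBase {L : Type*} [Group L] (t : ℕ) (ℓ : L) : Fin t → L :=
  fun i => if (i : ℕ) = t - 1 then ℓ else 1

/-- The twisted conjugacy class (twisted homogeneous rack) of `x ∈ L^t`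
with respect to `u`, i.e. the orbit of `x` under `g ⇀ x = g · x · u(g)⁻¹`. -/
def thrClassOf {L : Type*} [Group L] (θ : L ≃* L) (t : ℕ) (x : Fin t → L) :
    Set (Fin t → L) :=
  {y | ∃ g : Fin t → L, g * x * (thrU θ t g)⁻¹ = y}

/-- The twisted homogeneous rack `C_ℓ = C_{(e,…,e,ℓ)}` of class `(L, t, θ)`. -/
def thrClass {L : Type*} [Group L] (θ : L ≃* L) (t : ℕ) (ℓ : L) : Set (Fin t → L) :=
  thrClassOf θ t (thrBase t ℓ)

/-- The twisted conjugacy class `O^{L,θ}_ℓ = {a·ℓ·θ(a)⁻¹ : a ∈ L}`. -/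
def twConjClass {L : Type*} [Group L] (θ : L ≃* L) (ℓ : L) : Set L :=
  {k | ∃ a : L, a * ℓ * (θ a)⁻¹ = k}

private lemma tele {L : Type*} [Group L] (c : L) :
    ∀ (n : ℕ) (x g : ℕ → L),
      (List.ofFn (fun i : Fin (n+1) =>
        g i * x i * (if (i : ℕ) = 0 then c else g ((i : ℕ) - 1))⁻¹)).reverse.prod
      = g n * (List.ofFn (fun i : Fin (n+1) => x (i : ℕ))).reverse.prod * c⁻¹ := by
  intro n
  induction n with
  | zero => intro x g; simp
  | succ n ih =>
      intro x g
      rw [List.ofFn_succ' (fun i : Fin (n+2) =>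
        g i * x i * (if (i : ℕ) = 0 then c else g ((i : ℕ) - 1))⁻¹),
        List.ofFn_succ' (fun i : Fin (n+2) => x (i : ℕ))]
      simp only [List.concat_eq_append, List.reverse_append, List.reverse_cons,
        List.reverse_nil, List.nil_append, List.singleton_append, List.prod_cons,
        Fin.coe_castSucc, Fin.val_last]
      rw [ih x g, if_neg (by omega : ¬ (n + 1 = 0))]
      have : n + 1 - 1 = n := by omega
      rw [this]
      group

private lemma base_prod {L : Type*} [Group L] (n : ℕ) (ℓ : L) :
    (List.ofFn (thrBase (n+1) ℓ)).reverse.prod = ℓ := by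
  rw [List.ofFn_succ']
  simp only [List.concat_eq_append, List.reverse_append, List.reverse_cons,
    List.reverse_nil, List.nil_append, List.singleton_append, List.prod_cons]
  have h1 : thrBase (n+1) ℓ (Fin.last n) = ℓ := by simp [thrBase]
  have h2 : ∀ i : Fin n, thrBase (n+1) ℓ i.castSucc = 1 := by
    intro i
    have := i.2
    simp only [thrBase, Fin.coe_castSucc]
    rw [if_neg (by omega)]
  rw [h1]
  have : (List.ofFn fun i : Fin n => thrBase (n+1) ℓ i.castSucc).reverse.prod = 1 := by
    apply List.prod_eq_one
    intro a ha
    rw [List.mem_reverse, List.mem_ofFn] at ha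
    obtain ⟨i, rfl⟩ := ha
    exact h2 i
  rw [this, mul_one]

private lemma thrDesc {L : Type*} [Group L] (θ : L ≃* L) (t : ℕ) (ht : 2 ≤ t) (ℓ : L) :
    thrClass θ t ℓ = {x : Fin t → L | (List.ofFn x).reverse.prod ∈ twConjClass θ ℓ} := by
  obtain ⟨n, rfl⟩ : ∃ n, t = n + 1 := ⟨t - 1, by omega⟩
  have hn : 1 ≤ n := by omega
  ext x
  constructor
  · rintro ⟨g, rfl⟩
    refine ⟨g (Fin.last n), ?_⟩
    set G : ℕ → L := fun m => if h : m < n + 1 then g ⟨m, h⟩ else 1 with hG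
    set B : ℕ → L := fun m => if h : m < n + 1 then thrBase (n+1) ℓ ⟨m, h⟩ else 1 with hB
    have hGi : ∀ i : Fin (n+1), G (i : ℕ) = g i := by
      intro i; simp only [hG, i.2, dif_pos, Fin.eta]
    have hBi : ∀ i : Fin (n+1), B (i : ℕ) = thrBase (n+1) ℓ i := by
      intro i; simp only [hB, i.2, dif_pos, Fin.eta]
    have key : List.ofFn (g * thrBase (n+1) ℓ * (thrU θ (n+1) g)⁻¹) =
        List.ofFn (fun i : Fin (n+1) =>
          G i * B i * (if (i : ℕ) = 0 then θ (g (Fin.last n)) else G ((i : ℕ) - 1))⁻¹) := by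
      apply congrArg
      funext i
      simp only [Pi.mul_apply, Pi.inv_apply, hGi, hBi]
      congr 1
      rw [thrU]
      by_cases h0 : (i : ℕ) = 0
      · rw [if_pos h0, if_pos h0]
        rfl
      · rw [if_neg h0, if_neg h0, hG]
        have h1 : (i : ℕ) - 1 < n + 1 := by have := i.2; omega
        show _ = (if h : (i:ℕ) - 1 < n + 1 then g ⟨(i:ℕ) - 1, h⟩ else 1)⁻¹
        rw [dif_pos h1]
    rw [key, tele]
    have hGn : G n = g (Fin.last n) := by
      rw [hG]; simp only [dif_pos (by omega : n < n + 1)]; rfl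
    have hBofFn : (List.ofFn fun i : Fin (n+1) => B (i : ℕ)) = List.ofFn (thrBase (n+1) ℓ) := by
      apply congrArg; funext i; exact hBi i
    rw [hGn, hBofFn, base_prod]
  · rintro ⟨a, ha⟩
    set S : ℕ → L := fun i => ((List.ofFn x).drop i).reverse.prod with hSdef
    have hlen : (List.ofFn x).length = n + 1 := by simp
    have hS : ∀ i : ℕ, ∀ h : i < n + 1, S i = S (i+1) * x ⟨i, h⟩ := by
      intro i h
      have h' : i < (List.ofFn x).length := by rw [hlen]; exact h
      rw [hSdef]
      simp only
      rw [List.drop_eq_getElem_cons h', List.reverse_cons, List.prod_append,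
        List.prod_cons, List.prod_nil, mul_one, List.getElem_ofFn]
    have hS0 : S 0 = (List.ofFn x).reverse.prod := by rw [hSdef]; simp
    have hStop : S (n+1) = 1 := by
      rw [hSdef]; simp only
      rw [List.drop_eq_nil_of_le (by rw [hlen])]
      simp
    refine ⟨fun i => if (i : ℕ) = n then a else (S ((i : ℕ) + 1))⁻¹ * (a * ℓ), ?_⟩
    funext i
    simp only [Pi.mul_apply, Pi.inv_apply, thrU, thrBase]
    have hi := i.2
    by_cases h0 : (i : ℕ) = 0
    · rw [if_neg (show ¬(i:ℕ) = n by omega), if_neg (show ¬(i:ℕ) = n + 1 - 1 by omega),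
        if_pos h0, if_pos (show n + 1 - 1 = n by omega)]
      have hx0 : x i = x ⟨0, by omega⟩ := by congr 1; exact Fin.ext h0
      have hkey : a * ℓ * (θ a)⁻¹ = S 1 * x ⟨0, by omega⟩ := by
        rw [ha, ← hS0, hS 0 (by omega)]
      rw [hx0, h0]
      calc (S (0+1))⁻¹ * (a * ℓ) * 1 * (θ a)⁻¹
          = (S 1)⁻¹ * (a * ℓ * (θ a)⁻¹) := by group
        _ = (S 1)⁻¹ * (S 1 * x ⟨0, by omega⟩) := by rw [hkey]
        _ = x ⟨0, by omega⟩ := by group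
    · by_cases hN : (i : ℕ) = n
      · rw [if_pos hN, if_pos (show (i:ℕ) = n + 1 - 1 by omega), if_neg h0,
          if_neg (show ¬(i:ℕ) - 1 = n by omega)]
        have hxn : x i = x ⟨n, by omega⟩ := by congr 1; exact Fin.ext hN
        have hSn : S n = x ⟨n, by omega⟩ := by
          rw [hS n (by omega), hStop, one_mul]
        have h2 : (i : ℕ) - 1 + 1 = n := by omega
        rw [hxn, h2, ← hSn]
        group
      · rw [if_neg hN, if_neg (show ¬(i:ℕ) = n + 1 - 1 by omega), if_neg h0,
          if_neg (show ¬(i:ℕ) - 1 = n by omega)]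
        have h2 : (i : ℕ) - 1 + 1 = (i : ℕ) := by omega
        rw [h2]
        have hkey : S (i : ℕ) = S ((i : ℕ) + 1) * x ⟨(i : ℕ), by omega⟩ := hS _ (by omega)
        have hxi : x i = x ⟨(i : ℕ), by omega⟩ := by congr 1
        rw [hxi]
        calc (S ((i:ℕ)+1))⁻¹ * (a * ℓ) * 1 * ((S (i:ℕ))⁻¹ * (a * ℓ))⁻¹
            = (S ((i:ℕ)+1))⁻¹ * S (i:ℕ) := by group
          _ = x ⟨(i : ℕ), by omega⟩ := by rw [hkey]; group

/-- `C_ℓ = C_k` iff `k ∈ O^{L,θ}_ℓ`; hence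
`C_ℓ = {(x₁,…,x_t) ∈ L^t : x_t ⋯ x₁ ∈ O^{L,θ}_ℓ}`. -/
theorem thrClass_eq_iff_and_description {L : Type*} [Group L] [Fintype L]
    (θ : L ≃* L) (t : ℕ) (ht : 2 ≤ t) (ℓ k : L) :
    (thrClass θ t ℓ = thrClass θ t k ↔ k ∈ twConjClass θ ℓ) ∧
    thrClass θ t ℓ =
      {x : Fin t → L | (List.ofFn x).reverse.prod ∈ twConjClass θ ℓ} := by
  refine ⟨⟨?_, ?_⟩, thrDesc θ t ht ℓ⟩
  · intro h
    have hk : thrBase t k ∈ thrClass θ t k := by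
      refine ⟨1, ?_⟩
      funext i
      simp [thrU, thrBase]
    rw [← h, thrDesc θ t ht ℓ] at hk
    obtain ⟨n, rfl⟩ : ∃ n, t = n + 1 := ⟨t - 1, by omega⟩
    rwa [Set.mem_setOf_eq, base_prod] at hk
  · rintro ⟨a, ha⟩
    have hOO : twConjClass θ ℓ = twConjClass θ k := by
      ext m
      constructor
      · rintro ⟨b, rfl⟩
        refine ⟨b * a⁻¹, ?_⟩
        rw [← ha]
        simp only [map_mul, map_inv]
        group
      · rintro ⟨b, rfl⟩
        refine ⟨b * a, ?_⟩
        rw [← ha]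
        simp only [map_mul]
        group
    rw [thrDesc θ t ht ℓ, thrDesc θ t ht k, hOO]
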